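/- arXiv:0803.2091 — 2 statements merged into one kernel-verified Lean document; each statement's English description precedes it below -/
import Mathlib

section
/- Let c_i be a pure strategy of player i in a finite game. If there exists a dual vector α such that c_i ∉ C_i/α_i while C_j/α_j = C_j for every player j ≠ i (i.e., every pure strategy of every other player is α_j-stationary and forms its own minimal absorbing set), then there exists a mixed strategy σ_i ∈ Δ(C_i) with σ_i ≠ δ_{c_i} such that U_i(c_{-i}, σ_i) ≥ U_i(c_{-i}, c_i) for all c_{-i} ∈ C_{-i}. -/
open scoped BigOperators

section Prelim

variable {S : Type} [Fintype S] [DecidableEq S]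

/-- `σ` is a mixed strategy (probability distribution) on the finite set `S`. -/
def IsMixed (σ : S → ℝ) : Prop := (∀ s, 0 ≤ σ s) ∧ ∑ s, σ s = 1

/-- The Dirac measure `δ_s`. -/
def dirac (s : S) : S → ℝ := fun d => if d = s then 1 else 0

/-- `α_i * σ_i`, the image of the mixed strategy `σ` under the deviation plan `αᵢ`,
where `αᵢ c d` is the probability `αᵢ(d | c)`. -/
def devImage (αᵢ : S → S → ℝ) (σ : S → ℝ) : S → ℝ := fun d => ∑ c, σ c * αᵢ c d

/-- `σ` is `αᵢ`-stationary: `αᵢ * σ = σ`. -/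
def IsStationaryStrategy (αᵢ : S → S → ℝ) (σ : S → ℝ) : Prop := devImage αᵢ σ = σ

/-- A nonempty `B ⊆ S` is `αᵢ`-absorbing if `supp (αᵢ * c) ⊆ B` for all `c ∈ B`. -/
def IsAbsorbing (αᵢ : S → S → ℝ) (B : Finset S) : Prop :=
  B.Nonempty ∧ ∀ c ∈ B, ∀ d, 0 < αᵢ c d → d ∈ B

/-- A minimal absorbing set: an absorbing set containing no proper nonempty absorbing subset. -/
def IsMinimalAbsorbing (αᵢ : S → S → ℝ) (B : Finset S) : Prop :=
  IsAbsorbing αᵢ B ∧ ∀ B' ⊆ B, IsAbsorbing αᵢ B' → B' = B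

/-- `C_i/α_i`: the set of `αᵢ`-stationary mixed strategies whose support is contained
in some minimal `αᵢ`-absorbing set. -/
def ReducedSet (αᵢ : S → S → ℝ) : Set (S → ℝ) :=
  {σ | IsMixed σ ∧ IsStationaryStrategy αᵢ σ ∧
    ∃ B : Finset S, IsMinimalAbsorbing αᵢ B ∧ ∀ s, σ s ≠ 0 → s ∈ B}

end Prelim

section Games

variable {N : Type} [Fintype N] [DecidableEq N]
  {C : N → Type} [∀ i, Fintype (C i)] [∀ i, DecidableEq (C i)]

/-- Marginal probability of the pure strategy `cᵢ` of player `i` under `μ`. -/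
def marginal (μ : (∀ j, C j) → ℝ) (i : N) (cᵢ : C i) : ℝ :=
  ∑ c : ∀ j, C j, if c i = cᵢ then μ c else 0

/-- The incentive sum `∑_{c_{-i}} μ(c_{-i},cᵢ)[U_i(c_{-i},dᵢ) − U_i(c_{-i},cᵢ)]`. -/
def incentiveSum (U : ∀ i : N, (∀ j, C j) → ℝ) (μ : (∀ j, C j) → ℝ) (i : N) (cᵢ dᵢ : C i) : ℝ :=
  ∑ c : ∀ j, C j, if c i = cᵢ then μ c * (U i (Function.update c i dᵢ) - U i c) else 0

/-- Correlated equilibrium. -/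
def IsCorrelatedEq (U : ∀ i : N, (∀ j, C j) → ℝ) (μ : (∀ j, C j) → ℝ) : Prop :=
  (∀ c, 0 ≤ μ c) ∧ (∑ c : ∀ j, C j, μ c) = 1 ∧
    ∀ (i : N) (cᵢ dᵢ : C i), incentiveSum U μ i cᵢ dᵢ ≤ 0

/-- Multilinear extension: payoff of player `i` under the mixed strategy profile `σ`. -/
def mixedPayoff (U : ∀ i : N, (∀ j, C j) → ℝ) (σ : ∀ j, C j → ℝ) (i : N) : ℝ :=
  ∑ c : ∀ j, C j, (∏ j, σ j (c j)) * U i c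

/-- Nash equilibrium. -/
def IsNash (U : ∀ i : N, (∀ j, C j) → ℝ) (σ : ∀ j, C j → ℝ) : Prop :=
  (∀ i, IsMixed (σ i)) ∧
  ∀ (i : N) (dᵢ : C i),
    mixedPayoff U (Function.update σ i (dirac dᵢ)) i ≤ mixedPayoff U σ i

/-- `D(c, α) = ∑_i [U_i(c_{-i}, α_i * c_i) − U_i(c)]`. -/
def devGain (U : ∀ i : N, (∀ j, C j) → ℝ) (α : ∀ i, C i → C i → ℝ) (c : ∀ j, C j) : ℝ :=
  ∑ i, ((∑ dᵢ, α i (c i) dᵢ * U i (Function.update c i dᵢ)) - U i c)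

/-- A dual vector: a profile of deviation plans with `D(c,α) ≥ 0` for all `c`. -/
def IsDualVector (U : ∀ i : N, (∀ j, C j) → ℝ) (α : ∀ i, C i → C i → ℝ) : Prop :=
  (∀ (i : N) (cᵢ : C i), IsMixed (α i cᵢ)) ∧ ∀ c, 0 ≤ devGain U α c

/-- A strong dual vector: `D(c,α) > 0` whenever `c` has probability zero in all
correlated equilibria. -/
def IsStrong (U : ∀ i : N, (∀ j, C j) → ℝ) (α : ∀ i, C i → C i → ℝ) : Prop :=
  ∀ c : ∀ j, C j, (∀ μ, IsCorrelatedEq U μ → μ c = 0) → 0 < devGain U α c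

/-- A full dual vector: `α_i(dᵢ|cᵢ) > 0` whenever `β_i(dᵢ|cᵢ) > 0` for some dual vector `β`. -/
def IsFull (U : ∀ i : N, (∀ j, C j) → ℝ) (α : ∀ i, C i → C i → ℝ) : Prop :=
  ∀ (i : N) (cᵢ dᵢ : C i),
    (∃ β : ∀ i, C i → C i → ℝ, IsDualVector U β ∧ 0 < β i cᵢ dᵢ) → 0 < α i cᵢ dᵢ

end Games

/-!
Stationarity of every `δ_{cⱼ}` forces the other players' deviation plans to be the identity, so the
dual inequality `D(c, α) ≥ 0` at a profile with `cᵢ` in place says exactly that the mixed strategy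
`α_i * cᵢ` does at least as well as `cᵢ` against every `c_{-i}`. This strategy differs from
`δ_{cᵢ}`: otherwise `{cᵢ}` would be a minimal absorbing set with stationary strategy `δ_{cᵢ}`,
putting `δ_{cᵢ}` in `C_i/α_i`.
-/

theorem isMinimalAbsorbing_singleton {S : Type} {αᵢ : S → S → ℝ} {s : S}
    (h : ∀ d, 0 < αᵢ s d → d = s) : IsMinimalAbsorbing αᵢ {s} := by
  refine ⟨⟨Finset.singleton_nonempty s, ?_⟩, fun B' hB' hB'abs => ?_⟩
  · intro c hc d hd
    rw [Finset.mem_singleton] at hc ⊢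
    subst hc
    exact h d hd
  · exact (Finset.subset_singleton_iff.mp hB').resolve_left hB'abs.1.ne_empty

section Prelim

variable {S : Type} [Fintype S] [DecidableEq S]

theorem sum_dirac_mul (s : S) (f : S → ℝ) : ∑ d, dirac s d * f d = f s := by
  simp [dirac]

theorem isMixed_dirac (s : S) : IsMixed (dirac s) :=
  ⟨fun d => by unfold dirac; split_ifs <;> norm_num, by simp [dirac]⟩

theorem devImage_dirac (αᵢ : S → S → ℝ) (s : S) : devImage αᵢ (dirac s) = αᵢ s := by
  funext d
  exact sum_dirac_mul s (αᵢ · d)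

theorem isStationaryStrategy_dirac_iff {αᵢ : S → S → ℝ} {s : S} :
    IsStationaryStrategy αᵢ (dirac s) ↔ αᵢ s = dirac s := by
  rw [IsStationaryStrategy, devImage_dirac]

theorem dirac_mem_reducedSet {αᵢ : S → S → ℝ} {s : S} (h : αᵢ s = dirac s) :
    dirac s ∈ ReducedSet αᵢ := by
  refine ⟨isMixed_dirac s, isStationaryStrategy_dirac_iff.mpr h, {s}, ?_, ?_⟩
  · refine isMinimalAbsorbing_singleton fun d hd => ?_
    rw [h, dirac] at hd
    by_contra hds
    simp [hds] at hd
  · intro d hd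
    rw [Finset.mem_singleton]
    by_contra hds
    simp [dirac, hds] at hd

end Prelim

section Games

variable {N : Type} [Fintype N] [DecidableEq N]
  {C : N → Type} [∀ i, Fintype (C i)] [∀ i, DecidableEq (C i)]

theorem devGain_eq_of_forall_ne_eq_dirac {U : N → (∀ j, C j) → ℝ} {α : ∀ i, C i → C i → ℝ}
    {i : N} {c : ∀ j, C j} (hoff : ∀ j ≠ i, α j (c j) = dirac (c j)) :
    devGain U α c = ∑ d, α i (c i) d * U i (Function.update c i d) - U i c := by
  refine Finset.sum_eq_single_of_mem i (Finset.mem_univ i) fun j _ hj => ?_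
  rw [hoff j hj, sum_dirac_mul, Function.update_eq_self, sub_self]

theorem payoff_le_deviation_of_isDualVector {U : N → (∀ j, C j) → ℝ}
    {α : ∀ i, C i → C i → ℝ} (hα : IsDualVector U α) {i : N}
    (hoff : ∀ j ≠ i, ∀ cj : C j, α j cj = dirac cj) (cᵢ : C i) (c : ∀ j, C j) :
    U i (Function.update c i cᵢ) ≤ ∑ d, α i cᵢ d * U i (Function.update c i d) := by
  have hgain := hα.2 (Function.update c i cᵢ)
  rw [devGain_eq_of_forall_ne_eq_dirac fun j hj => hoff j hj _] at hgain
  simpa only [Function.update_self, Function.update_idem, sub_nonneg] using hgain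

end Games

theorem eliminated_alone_implies_weakly_dominated_general
    {N : Type} [Fintype N] [DecidableEq N]
    {C : N → Type} [∀ i, Fintype (C i)] [∀ i, DecidableEq (C i)]
    (U : ∀ i : N, (∀ j, C j) → ℝ) (i : N) (cᵢ : C i)
    (α : ∀ j, C j → C j → ℝ) (hα : IsDualVector U α)
    (hnot : dirac cᵢ ∉ ReducedSet (α i))
    (hothers : ∀ j, j ≠ i → ∀ cj : C j,
      IsStationaryStrategy (α j) (dirac cj) ∧ IsMinimalAbsorbing (α j) {cj}) :
    ∃ σᵢ : C i → ℝ, IsMixed σᵢ ∧ σᵢ ≠ dirac cᵢ ∧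
      ∀ c : ∀ j, C j,
        U i (Function.update c i cᵢ) ≤ ∑ dᵢ, σᵢ dᵢ * U i (Function.update c i dᵢ) := by
  have hoff : ∀ j ≠ i, ∀ cj : C j, α j cj = dirac cj := fun j hj cj =>
    isStationaryStrategy_dirac_iff.mp (hothers j hj cj).1
  exact ⟨α i cᵢ, hα.1 i cᵢ, fun h => hnot (dirac_mem_reducedSet h),
    payoff_le_deviation_of_isDualVector hα hoff cᵢ⟩

/-- If some dual vector `α` eliminates `cᵢ` while keeping every pure strategy of every other
player (each being `α j`-stationary and its own minimal absorbing set), then `cᵢ` is weakly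
dominated by, or equivalent to, some other mixed strategy `σᵢ`. -/
theorem eliminated_alone_implies_weakly_dominated
    {N : Type} [Fintype N] [DecidableEq N] [Nonempty N]
    {C : N → Type} [∀ i, Fintype (C i)] [∀ i, DecidableEq (C i)] [∀ i, Nonempty (C i)]
    (U : ∀ i : N, (∀ j, C j) → ℝ) (i : N) (cᵢ : C i)
    (α : ∀ j, C j → C j → ℝ) (hα : IsDualVector U α)
    (hnot : dirac cᵢ ∉ ReducedSet (α i))
    (hothers : ∀ j, j ≠ i → ∀ cj : C j,
      IsStationaryStrategy (α j) (dirac cj) ∧ IsMinimalAbsorbing (α j) {cj}) :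
    ∃ σᵢ : C i → ℝ, IsMixed σᵢ ∧ σᵢ ≠ dirac cᵢ ∧
      ∀ c : ∀ j, C j,
        U i (Function.update c i cᵢ) ≤ ∑ dᵢ, σᵢ dᵢ * U i (Function.update c i dᵢ) :=
  eliminated_alone_implies_weakly_dominated_general U i cᵢ α hα hnot hothers
end

section
/- Let α be a dual vector of a finite game Γ. For each player i, let B_i ⊆ C_i be a minimal α_i-absorbing set, let σ_{B_i} be the unique α_i-stationary mixed strategy with support contained in B_i, and let B = ∏_{i∈N} B_i. Then σ_B = (σ_{B_i})_{i∈N} is a completely mixed Nash equilibrium of the restricted game Γ_B = (N, (B_i)_{i∈N}, (U_i)_{i∈N}); in particular, the support of σ_{B_i} is exactly B_i for every i. -/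
open scoped BigOperators

/-!
The support of a stationary strategy is absorbing, so by minimality it is all of `B i`.
For the Nash property fix a player `i` and let `f b` be the payoff of `b` against `σ₋ᵢ`.
Averaging `D(c, α) ≥ 0` over `c` drawn from `σ` with player `i` pinned to `b`, the terms of
the other players vanish because their strategies are stationary; what remains says that
`f` is subharmonic for `α i`. As `σ i` is stationary, `f` is then harmonic on its support
`B i`, and by the maximum principle on the minimal absorbing set `B i` it is constant there.
Hence `U i σ = ∑ b, σ i b * f b = f d` for every `d ∈ B i`.
-/

section Kernel

variable {S : Type} [Fintype S] {P : S → S → ℝ} {σ f : S → ℝ}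

theorem isAbsorbing_support_of_stationary (hP : ∀ c d, 0 ≤ P c d) (hσ : IsMixed σ)
    (hst : IsStationaryStrategy P σ) : IsAbsorbing P ({s | σ s ≠ 0} : Finset S) := by
  refine ⟨?_, fun c hc d hd => ?_⟩
  · obtain ⟨s, -, hs⟩ := Finset.exists_ne_zero_of_sum_ne_zero (hσ.2 ▸ one_ne_zero)
    exact ⟨s, by simpa using hs⟩
  · have hc : 0 < σ c := (hσ.1 c).lt_of_ne' (by simpa using hc)
    have hd : 0 < devImage P σ d :=
      Finset.sum_pos' (fun x _ => mul_nonneg (hσ.1 x) (hP x d))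
        ⟨c, Finset.mem_univ c, mul_pos hc hd⟩
    rw [hst] at hd
    simpa using hd.ne'

theorem IsMinimalAbsorbing.pos_of_stationary {B : Finset S} (hB : IsMinimalAbsorbing P B)
    (hP : ∀ c d, 0 ≤ P c d) (hσ : IsMixed σ) (hst : IsStationaryStrategy P σ)
    (hsupp : ∀ s, σ s ≠ 0 → s ∈ B) {b : S} (hb : b ∈ B) : 0 < σ b := by
  have hsupp_eq : ({s | σ s ≠ 0} : Finset S) = B :=
    hB.2 _ (fun s hs => hsupp s (by simpa using hs))
      (isAbsorbing_support_of_stationary hP hσ hst)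
  rw [← hsupp_eq] at hb
  exact (hσ.1 b).lt_of_ne' (by simpa using hb)

theorem sum_mul_sum_kernel_of_stationary (hst : IsStationaryStrategy P σ) (f : S → ℝ) :
    ∑ b, σ b * ∑ d, P b d * f d = ∑ b, σ b * f b := by
  simp_rw [Finset.mul_sum, ← mul_assoc]
  rw [Finset.sum_comm]
  simp_rw [← Finset.sum_mul]
  exact Finset.sum_congr rfl fun d _ => by rw [← devImage, hst]

theorem sum_kernel_eq_of_stationary_of_le (hσ : ∀ s, 0 ≤ σ s)
    (hst : IsStationaryStrategy P σ) (hsub : ∀ b, f b ≤ ∑ d, P b d * f d) {b : S}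
    (hb : 0 < σ b) : ∑ d, P b d * f d = f b := by
  have hgap : ∑ c, σ c * ((∑ d, P c d * f d) - f c) = 0 := by
    simp_rw [mul_sub]
    rw [Finset.sum_sub_distrib, sum_mul_sum_kernel_of_stationary hst, sub_self]
  have hgap_b := (Finset.sum_eq_zero_iff_of_nonneg fun c _ =>
    mul_nonneg (hσ c) (sub_nonneg.2 (hsub c))).1 hgap b (Finset.mem_univ b)
  exact sub_eq_zero.1 ((mul_eq_zero.1 hgap_b).resolve_left hb.ne')

theorem eq_of_sum_kernel_eq_of_le {b : S} (hP : IsMixed (P b)) (hharm : ∑ d, P b d * f d = f b)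
    (hle : ∀ d, 0 < P b d → f d ≤ f b) {d : S} (hd : 0 < P b d) : f d = f b := by
  have hterm : ∀ e, 0 ≤ P b e * (f b - f e) := fun e =>
    (hP.1 e).eq_or_lt.elim (fun h => by simp [← h])
      fun h => mul_nonneg h.le (sub_nonneg.2 (hle e h))
  have hgap : ∑ e, P b e * (f b - f e) = 0 := by
    simp_rw [mul_sub]
    rw [Finset.sum_sub_distrib, ← Finset.sum_mul, hP.2, hharm, one_mul, sub_self]
  have hgap_d := (Finset.sum_eq_zero_iff_of_nonneg fun e _ => hterm e).1 hgap d
    (Finset.mem_univ d)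
  linarith [(mul_eq_zero.1 hgap_d).resolve_left hd.ne']

/-- Maximum principle: the maximisers of `f` on `B` form an absorbing subset of `B`. -/
theorem IsMinimalAbsorbing.eq_of_sum_kernel_eq {B : Finset S} (hB : IsMinimalAbsorbing P B)
    (hP : ∀ c, IsMixed (P c)) (hharm : ∀ b ∈ B, ∑ d, P b d * f d = f b) {b b' : S}
    (hb : b ∈ B) (hb' : b' ∈ B) : f b = f b' := by
  set M := B.filter fun c => ∀ c' ∈ B, f c' ≤ f c
  have hM : M = B := by
    refine hB.2 M (Finset.filter_subset _ _) ⟨?_, fun c hc d hd => ?_⟩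
    · obtain ⟨m, hm, hmax⟩ := Finset.exists_max_image B f hB.1.1
      exact ⟨m, Finset.mem_filter.2 ⟨hm, hmax⟩⟩
    · obtain ⟨hcB, hcmax⟩ := Finset.mem_filter.1 hc
      have hstep := hB.1.2 c hcB
      have hfd := eq_of_sum_kernel_eq_of_le (hP c) (hharm c hcB)
        (fun e he => hcmax e (hstep e he)) hd
      exact Finset.mem_filter.2 ⟨hstep d hd, fun c' hc' => hfd ▸ hcmax c' hc'⟩
  have hmax : ∀ c ∈ B, ∀ c' ∈ B, f c' ≤ f c := fun c hc => by
    rw [← hM] at hc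
    exact (Finset.mem_filter.1 hc).2
  exact le_antisymm (hmax b' hb' b hb) (hmax b hb b' hb')

theorem devImage_dirac_s18 [DecidableEq S] (b : S) : devImage P (dirac b) = P b := by
  ext d
  simp [devImage, dirac]

end Kernel

section ProductExpectation

variable {N : Type} [Fintype N] [DecidableEq N] {C : N → Type}

def weightExcept (τ : ∀ j, C j → ℝ) (j : N) (c : ∀ k, C k) : ℝ :=
  ∏ k ∈ Finset.univ.erase j, τ k (c k)

theorem weightExcept_update (τ : ∀ j, C j → ℝ) (j : N) (c : ∀ k, C k) (x : C j) :
    weightExcept τ j (Function.update c j x) = weightExcept τ j c :=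
  Finset.prod_congr rfl fun k hk => by rw [Function.update_of_ne (Finset.ne_of_mem_erase hk)]

variable [∀ i, Fintype (C i)]

def prodExpect (τ : ∀ j, C j → ℝ) (H : (∀ j, C j) → ℝ) : ℝ :=
  ∑ c : ∀ j, C j, (∏ j, τ j (c j)) * H c

theorem mixedPayoff_eq_prodExpect (U : ∀ i : N, (∀ j, C j) → ℝ) (σ : ∀ j, C j → ℝ) (i : N) :
    mixedPayoff U σ i = prodExpect σ (U i) := rfl

theorem prodExpect_nonneg {τ : ∀ j, C j → ℝ} {H : (∀ j, C j) → ℝ} (hτ : ∀ j x, 0 ≤ τ j x)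
    (hH : ∀ c, 0 ≤ H c) : 0 ≤ prodExpect τ H :=
  Finset.sum_nonneg fun c _ => mul_nonneg (Finset.prod_nonneg fun j _ => hτ j _) (hH c)

theorem prodExpect_sum_sub {ι : Type} [Fintype ι] (τ : ∀ j, C j → ℝ)
    (F G : ι → (∀ j, C j) → ℝ) :
    prodExpect τ (fun c => ∑ k, (F k c - G k c)) =
      ∑ k, (prodExpect τ (F k) - prodExpect τ (G k)) := by
  simp only [prodExpect, Finset.mul_sum, mul_sub, Finset.sum_sub_distrib]
  exact congrArg₂ _ Finset.sum_comm Finset.sum_comm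

theorem prodExpect_update (τ : ∀ j, C j → ℝ) (j : N) (ρ : C j → ℝ) (H : (∀ j, C j) → ℝ) :
    prodExpect (Function.update τ j ρ) H = ∑ c, ρ (c j) * weightExcept τ j c * H c := by
  refine Finset.sum_congr rfl fun c _ => ?_
  rw [← Finset.mul_prod_erase _ _ (Finset.mem_univ j), Function.update_self, weightExcept]
  congr 2
  exact Finset.prod_congr rfl fun k hk => by rw [Function.update_of_ne (Finset.ne_of_mem_erase hk)]

theorem sum_sum_update_swap {M : Type} [AddCommMonoid M] (j : N) (g : (∀ k, C k) → C j → M) :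
    ∑ c, ∑ d, g c d = ∑ c, ∑ d, g (Function.update c j d) (c j) := by
  have hinv : Function.Involutive fun p : (∀ k, C k) × C j =>
      (Function.update p.1 j p.2, p.1 j) := fun p => by simp
  simp only [← Fintype.sum_prod_type']
  exact (Fintype.sum_equiv hinv.toPerm _ _ fun p => rfl).symm

theorem prodExpect_deviation (τ : ∀ j, C j → ℝ) (j : N) (P : C j → C j → ℝ)
    (H : (∀ j, C j) → ℝ) :
    prodExpect τ (fun c => ∑ d, P (c j) d * H (Function.update c j d)) =
      prodExpect (Function.update τ j (devImage P (τ j))) H := by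
  conv_lhs => rw [← Function.update_eq_self j τ]
  rw [prodExpect_update, prodExpect_update]
  simp only [Finset.mul_sum]
  rw [sum_sum_update_swap j]
  simp only [devImage, Finset.sum_mul, Function.update_self, Function.update_idem,
    Function.update_eq_self, weightExcept_update]
  refine Finset.sum_congr rfl fun c _ => Finset.sum_congr rfl fun d _ => by ring

variable [∀ i, DecidableEq (C i)]

theorem prodExpect_update_eq_sum_dirac (τ : ∀ j, C j → ℝ) (j : N) (ρ : C j → ℝ)
    (H : (∀ j, C j) → ℝ) :
    prodExpect (Function.update τ j ρ) H =
      ∑ x, ρ x * prodExpect (Function.update τ j (dirac x)) H := by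
  simp only [prodExpect_update, Finset.mul_sum, dirac]
  rw [Finset.sum_comm]
  refine Finset.sum_congr rfl fun c _ => ?_
  simp [← mul_assoc]

end ProductExpectation

section DualVector

variable {N : Type} [Fintype N] [DecidableEq N] {C : N → Type} [∀ i, Fintype (C i)]
  {U : ∀ i : N, (∀ j, C j) → ℝ} {α : ∀ i, C i → C i → ℝ}

theorem prodExpect_devGain (τ : ∀ j, C j → ℝ) :
    prodExpect τ (devGain U α) =
      ∑ j, (prodExpect (Function.update τ j (devImage (α j) (τ j))) (U j) -
        prodExpect τ (U j)) :=
  (prodExpect_sum_sub τ _ _).trans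
    (Finset.sum_congr rfl fun j _ => by rw [prodExpect_deviation])

variable [∀ i, DecidableEq (C i)]

theorem mixedPayoff_eq_sum_dirac (σ : ∀ j, C j → ℝ) (i : N) :
    mixedPayoff U σ i = ∑ b, σ i b * mixedPayoff U (Function.update σ i (dirac b)) i := by
  conv_lhs => rw [← Function.update_eq_self i σ]
  exact prodExpect_update_eq_sum_dirac σ i (σ i) (U i)

theorem IsDualVector.payoff_le_sum_kernel_mul_payoff (hα : IsDualVector U α)
    {σ : ∀ j, C j → ℝ} (hσ : ∀ j x, 0 ≤ σ j x) {i : N}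
    (hstat : ∀ j ≠ i, IsStationaryStrategy (α j) (σ j)) (b : C i) :
    mixedPayoff U (Function.update σ i (dirac b)) i ≤
      ∑ d, α i b d * mixedPayoff U (Function.update σ i (dirac d)) i := by
  set τ := Function.update σ i (dirac b) with hτ_def
  have hτ : ∀ j x, 0 ≤ τ j x := by
    refine (Function.forall_update_iff σ fun j (ρ : C j → ℝ) => ∀ x, 0 ≤ ρ x).2
      ⟨fun x => ?_, fun j _ => hσ j⟩
    unfold dirac
    split_ifs <;> norm_num
  have hother : ∀ j ≠ i, Function.update τ j (devImage (α j) (τ j)) = τ := fun j hj => by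
    have hτj : τ j = σ j := Function.update_of_ne hj _ _
    rw [hτj, hstat j hj, ← hτj, Function.update_eq_self]
  have hgain := prodExpect_nonneg hτ hα.2
  rw [prodExpect_devGain, Finset.sum_eq_single i
    (fun j _ hj => by rw [hother j hj, sub_self]) (by simp)] at hgain
  rw [show τ i = dirac b from Function.update_self .., devImage_dirac_s18, hτ_def,
    Function.update_idem, prodExpect_update_eq_sum_dirac] at hgain
  simp only [mixedPayoff_eq_prodExpect] at hgain ⊢
  linarith

end DualVector

theorem stationary_profile_on_minimal_blocks_is_nash_general
    {N : Type} [Fintype N] [DecidableEq N]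
    {C : N → Type} [∀ i, Fintype (C i)] [∀ i, DecidableEq (C i)]
    (U : ∀ i : N, (∀ j, C j) → ℝ) (α : ∀ i, C i → C i → ℝ) (hα : IsDualVector U α)
    (B : ∀ i, Finset (C i)) (hB : ∀ i, IsMinimalAbsorbing (α i) (B i))
    (σ : ∀ i, C i → ℝ) (hmix : ∀ i, IsMixed (σ i))
    (hstat : ∀ i, IsStationaryStrategy (α i) (σ i))
    (hsupp : ∀ (i : N) (cᵢ : C i), σ i cᵢ ≠ 0 → cᵢ ∈ B i) :
    (∀ i : N, ∀ bᵢ ∈ B i, 0 < σ i bᵢ) ∧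
    (∀ i : N, ∀ dᵢ ∈ B i,
      mixedPayoff U (Function.update σ i (dirac dᵢ)) i ≤ mixedPayoff U σ i) := by
  have hpos : ∀ i, ∀ b ∈ B i, 0 < σ i b := fun i _ hb =>
    (hB i).pos_of_stationary (fun c => (hα.1 i c).1) (hmix i) (hstat i) (hsupp i) hb
  refine ⟨hpos, fun i d hd => ?_⟩
  set f : C i → ℝ := fun x => mixedPayoff U (Function.update σ i (dirac x)) i
  have hsub : ∀ b, f b ≤ ∑ x, α i b x * f x :=
    hα.payoff_le_sum_kernel_mul_payoff (fun j => (hmix j).1) (fun j _ => hstat j)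
  have hconst : ∀ b ∈ B i, f b = f d := fun b hb =>
    (hB i).eq_of_sum_kernel_eq (hα.1 i)
      (fun c hc => sum_kernel_eq_of_stationary_of_le (hmix i).1 (hstat i) hsub (hpos i c hc))
      hb hd
  refine le_of_eq ?_
  calc f d = ∑ b, σ i b * f d := by rw [← Finset.sum_mul, (hmix i).2, one_mul]
    _ = ∑ b, σ i b * f b := Finset.sum_congr rfl fun b _ => by
        by_cases h : σ i b = 0
        · rw [h, zero_mul, zero_mul]
        · rw [hconst b (hsupp i b h)]
    _ = mixedPayoff U σ i := (mixedPayoff_eq_sum_dirac σ i).symm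

/-- If `α` is a dual vector, `B i` a minimal `α i`-absorbing set for each `i`, and `σ i` the
`α i`-stationary strategy with support in `B i`, then `σ` is a completely mixed Nash
equilibrium of the restricted game `Γ_B`. -/
theorem stationary_profile_on_minimal_blocks_is_nash
    {N : Type} [Fintype N] [DecidableEq N] [Nonempty N]
    {C : N → Type} [∀ i, Fintype (C i)] [∀ i, DecidableEq (C i)] [∀ i, Nonempty (C i)]
    (U : ∀ i : N, (∀ j, C j) → ℝ) (α : ∀ i, C i → C i → ℝ) (hα : IsDualVector U α)
    (B : ∀ i, Finset (C i)) (hB : ∀ i, IsMinimalAbsorbing (α i) (B i))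
    (σ : ∀ i, C i → ℝ) (hmix : ∀ i, IsMixed (σ i))
    (hstat : ∀ i, IsStationaryStrategy (α i) (σ i))
    (hsupp : ∀ (i : N) (cᵢ : C i), σ i cᵢ ≠ 0 → cᵢ ∈ B i) :
    (∀ i : N, ∀ bᵢ ∈ B i, 0 < σ i bᵢ) ∧
    (∀ i : N, ∀ dᵢ ∈ B i,
      mixedPayoff U (Function.update σ i (dirac dᵢ)) i ≤ mixedPayoff U σ i) :=
  stationary_profile_on_minimal_blocks_is_nash_general U α hα B hB σ hmix hstat hsupp
end
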